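/- arXiv:0709.1417 — 3 statements merged into one kernel-verified Lean document; each statement's English description precedes it below -/
import Mathlib

section
/- Let d ≥ 1 and let F = (F₀,F₁,F₂,F₃) = (z^d, 0, 1, 0). Then the linear map dQ_F : (ℂ[z]_{≤d})⁴ → ℂ[z]_{≤2d-2} given by dQ_F(U) = {U₀,F₁} + {F₀,U₁} + {U₂,F₃} + {F₂,U₃}, where {G,H} = G'·H - G·H', is surjective. -/
/-!
Only `U₁` and `U₃` contribute, through `{z^d, U₁}` and `-U₃'`. Since
`{z^d, z^k} = (d - k) z^(d+k-1)` with `d - k ≠ 0` for `k < d`, the first term reaches every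
`z^(d-1) Q` with `deg Q ≤ d - 1`, and antiderivatives make the second reach every polynomial of
degree `≤ d - 1`. Division with remainder by `z^(d-1)` writes `R` as a sum of two such pieces.
-/

open Polynomial Finset

theorem derivative_X_pow_succ_mul_X_pow_sub {R : Type*} [CommRing R] (n k : ℕ) :
    derivative (X ^ (n + 1) : R[X]) * X ^ k - X ^ (n + 1) * derivative (X ^ k)
      = C ((n : R) + 1 - k) * X ^ (n + k) := by
  rcases k with _ | j
  · simp
  · simp only [derivative_X_pow, Nat.add_sub_cancel, map_sub, map_add, map_natCast, map_one,
      Nat.cast_add, Nat.cast_one]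
    ring

section CharZero

variable {K : Type*} [Field K] [CharZero K]

theorem exists_natDegree_le_derivative_eq (P : K[X]) :
    ∃ V : K[X], V.natDegree ≤ P.natDegree + 1 ∧ derivative V = P := by
  refine ⟨∑ i ∈ range (P.natDegree + 1), C (P.coeff i / (i + 1)) * X ^ (i + 1), ?_, ?_⟩
  · refine natDegree_sum_le_of_forall_le _ _ fun i hi => ?_
    exact (natDegree_C_mul_X_pow_le _ _).trans (by simp at hi; omega)
  · conv_rhs => rw [P.as_sum_range_C_mul_X_pow]
    rw [derivative_sum]
    refine sum_congr rfl fun i _ => ?_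
    rw [derivative_C_mul_X_pow, Nat.add_sub_cancel, Nat.cast_add_one,
      div_mul_cancel₀ _ (Nat.cast_add_one_ne_zero i)]

theorem exists_natDegree_le_derivative_X_pow_mul_sub (n : ℕ) {Q : K[X]} (hQ : Q.natDegree ≤ n) :
    ∃ U : K[X], U.natDegree ≤ n ∧
      derivative (X ^ (n + 1) : K[X]) * U - X ^ (n + 1) * derivative U = X ^ n * Q := by
  have hne : ∀ k ∈ range (n + 1), (n : K) + 1 - k ≠ 0 := fun k hk =>
    sub_ne_zero.2 (by exact_mod_cast (by simp at hk; omega : n + 1 ≠ k))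
  refine ⟨∑ k ∈ range (n + 1), C (Q.coeff k / ((n : K) + 1 - k)) * X ^ k, ?_, ?_⟩
  · refine natDegree_sum_le_of_forall_le _ _ fun k hk => ?_
    exact (natDegree_C_mul_X_pow_le _ _).trans (by simp at hk; omega)
  · conv_rhs => rw [Q.as_sum_range' (n + 1) (by omega), mul_sum]
    rw [derivative_sum, mul_sum, mul_sum, ← sum_sub_distrib]
    refine sum_congr rfl fun k hk => ?_
    rw [derivative_C_mul, mul_left_comm, mul_left_comm (X ^ (n + 1)), ← mul_sub,
      derivative_X_pow_succ_mul_X_pow_sub, ← mul_assoc, ← C_mul, div_mul_cancel₀ _ (hne k hk),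
      ← C_mul_X_pow_eq_monomial, pow_add]
    ring

end CharZero

/-- For `F = (z^d, 0, 1, 0)`, the linear map
`dQ_F(U) = {U₀,F₁} + {F₀,U₁} + {U₂,F₃} + {F₂,U₃}` (with `{G,H} = G'H - GH'`)
from `(ℂ[z]_{≤d})⁴` to `ℂ[z]_{≤2d-2}` is surjective. -/
theorem stmt4 (d : ℕ) (hd : 1 ≤ d) (R : ℂ[X]) (hR : R.natDegree ≤ 2 * d - 2) :
    ∃ U₀ U₁ U₂ U₃ : ℂ[X],
      U₀.natDegree ≤ d ∧ U₁.natDegree ≤ d ∧ U₂.natDegree ≤ d ∧ U₃.natDegree ≤ d ∧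
      (derivative U₀ * 0 - U₀ * derivative (0 : ℂ[X]))
        + (derivative (X ^ d : ℂ[X]) * U₁ - X ^ d * derivative U₁)
        + (derivative U₂ * 0 - U₂ * derivative (0 : ℂ[X]))
        + (derivative (1 : ℂ[X]) * U₃ - 1 * derivative U₃) = R := by
  obtain ⟨n, rfl⟩ : ∃ n, d = n + 1 := ⟨d - 1, by omega⟩
  have hmonic : (X ^ n : ℂ[X]).Monic := monic_X_pow n
  obtain ⟨U₁, hU₁, hbracket⟩ := exists_natDegree_le_derivative_X_pow_mul_sub n
    (Q := R /ₘ X ^ n) (by rw [natDegree_divByMonic _ hmonic, natDegree_X_pow]; omega)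
  obtain ⟨V, hV, hderiv⟩ := exists_natDegree_le_derivative_eq (R %ₘ X ^ n)
  have hlow : (R %ₘ X ^ n).natDegree ≤ n := by
    simpa using natDegree_modByMonic_le R hmonic
  refine ⟨0, U₁, 0, -V, by simp, by omega, by simp, by rw [natDegree_neg]; omega, ?_⟩
  simp only [mul_zero, derivative_zero, sub_zero, zero_add, add_zero, derivative_one, zero_mul,
    one_mul, derivative_neg, sub_neg_eq_add, hbracket, hderiv]
  exact (add_comm _ _).trans (modByMonic_add_div R (X ^ n))
end

section
/- Let d ≥ 3 and let F = (z^{d-1} - 1, -d·z/(d-2), z^d - d·z/(d-2), 1). Then the linear map dQ_F : (ℂ[z]_{≤d})⁴ → ℂ[z]_{≤2d-2}, dQ_F(U) = {U₀,F₁} + {F₀,U₁} + {U₂,F₃} + {F₂,U₃} with {G,H} = G'H - GH', is surjective. -/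
/-!
Only the `U₁, U₂, U₃` terms are needed. Since `F₃ = 1`, the term `{U₂, F₃} = U₂'` produces every
monomial of degree `< d`. Modulo those, `{F₀, X^m} ≡ {X^(d-1), X^m} = (d-1-m) X^(m+d-2)`, which
gives the degrees `d, …, 2d-2` except `2d-3`, and `{F₂, X^(d-2)} ≡ {X^d, X^(d-2)} = 2 X^(2d-3)`
fills that gap.
-/

open Polynomial

section CommRing

variable {R : Type*} [CommRing R]

namespace Polynomial

theorem wronskian_X_pow_X_pow (a b : ℕ) :
    wronskian (X ^ a : R[X]) (X ^ b) = C ((b : R) - a) * X ^ (a + b - 1) := by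
  rcases a with _ | a <;> rcases b with _ | b
  · simp [wronskian]
  · simp [wronskian]
  · simp [wronskian]; ring
  · rw [show a + 1 + (b + 1) - 1 = a + b + 1 by omega]
    simp only [wronskian, derivative_X_pow, Nat.add_sub_cancel, Nat.cast_add_one, C_add, C_sub,
      C_1]
    ring

theorem wronskian_one_right (p : R[X]) : wronskian p 1 = -derivative p := by
  simp [wronskian]

theorem X_pow_mem_degreeLE [Nontrivial R] {m n : ℕ} (h : m ≤ n) : (X ^ m : R[X]) ∈ degreeLE R n :=
  mem_degreeLE.2 (by rw [degree_X_pow]; exact_mod_cast h)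

end Polynomial

/-- `(U₁, U₂, U₃) ↦ {X^(d-1) - 1, U₁} + {U₂, 1} + {X^d - c X, U₃}`, for the bracket
`{G, H} = G' H - G H' = wronskian H G`. -/
noncomputable def dQ (d : ℕ) (c : R) : R[X] × R[X] × R[X] →ₗ[R] R[X] :=
  (wronskianBilin R).flip (X ^ (d - 1) - 1) ∘ₗ LinearMap.fst R _ _
    + derivative ∘ₗ LinearMap.fst R _ _ ∘ₗ LinearMap.snd R _ _
    + (wronskianBilin R).flip (X ^ d - C c * X) ∘ₗ LinearMap.snd R _ _ ∘ₗ LinearMap.snd R _ _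

theorem dQ_apply (d : ℕ) (c : R) (U : R[X] × R[X] × R[X]) :
    dQ d c U =
      wronskian U.1 (X ^ (d - 1) - 1) + derivative U.2.1 + wronskian U.2.2 (X ^ d - C c * X) :=
  rfl

noncomputable def imageDQ (d : ℕ) (c : R) : Submodule R R[X] :=
  ((degreeLE R d).prod ((degreeLE R d).prod (degreeLE R d))).map (dQ d c)

namespace imageDQ

variable {d : ℕ} {c : R} {U : R[X]}

theorem wronskian_sub_one_mem (hU : U ∈ degreeLE R d) :
    wronskian U (X ^ (d - 1) - 1) ∈ imageDQ d c :=
  ⟨(U, 0, 0), by simp [hU], by simp [dQ_apply]⟩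

theorem derivative_mem (hU : U ∈ degreeLE R d) : derivative U ∈ imageDQ d c :=
  ⟨(0, U, 0), by simp [hU], by simp [dQ_apply]⟩

theorem wronskian_sub_C_mul_X_mem (hU : U ∈ degreeLE R d) :
    wronskian U (X ^ d - C c * X) ∈ imageDQ d c :=
  ⟨(0, 0, U), by simp [hU], by simp [dQ_apply]⟩

theorem wronskian_X_pow_pred_mem (hU : U ∈ degreeLE R d) :
    wronskian U (X ^ (d - 1)) ∈ imageDQ d c := by
  rw [← sub_add_cancel (X ^ (d - 1) : R[X]) 1, wronskian_add_right, wronskian_one_right]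
  exact add_mem (wronskian_sub_one_mem hU) (neg_mem (derivative_mem hU))

end imageDQ

end CommRing

theorem mem_of_C_mul_mem {K : Type*} [Field K] {S : Submodule K K[X]} {a : K} {p : K[X]}
    (ha : a ≠ 0) (h : C a * p ∈ S) : p ∈ S :=
  (Submodule.smul_mem_iff S ha).1 (by rwa [smul_eq_C_mul])

namespace imageDQ

variable {K : Type*} [Field K] [CharZero K] {d : ℕ} {c : K}

theorem X_pow_mem_of_lt {k : ℕ} (hk : k < d) : (X ^ k : K[X]) ∈ imageDQ d c := by
  have h := derivative_mem (c := c) (X_pow_mem_degreeLE (R := K) (show k + 1 ≤ d from hk))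
  rw [derivative_X_pow, Nat.add_sub_cancel] at h
  exact mem_of_C_mul_mem (Nat.cast_add_one_ne_zero k) (by exact_mod_cast h)

theorem wronskian_X_pow_mem {m : ℕ} (hm : m < d) :
    wronskian (X ^ m) (X ^ d) ∈ imageDQ d c := by
  have hX : wronskian (X ^ m : K[X]) X ∈ imageDQ d c := by
    have h := wronskian_X_pow_X_pow (R := K) m 1
    rw [pow_one, Nat.add_sub_cancel] at h
    rw [h, ← smul_eq_C_mul]
    exact Submodule.smul_mem _ _ (X_pow_mem_of_lt hm)
  have hcX : wronskian (X ^ m) (C c * X) = c • wronskian (X ^ m : K[X]) X := by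
    rw [← smul_eq_C_mul]
    exact (wronskianBilin K _).map_smul c X
  rw [← sub_add_cancel (X ^ d : K[X]) (C c * X), wronskian_add_right, hcX]
  exact add_mem (wronskian_sub_C_mul_X_mem (X_pow_mem_degreeLE hm.le)) (Submodule.smul_mem _ _ hX)

theorem X_pow_mem (hd : 2 ≤ d) {k : ℕ} (hk : k ≤ 2 * d - 2) : (X ^ k : K[X]) ∈ imageDQ d c := by
  rcases lt_or_ge k d with hkd | hkd
  · exact X_pow_mem_of_lt hkd
  obtain rfl | hk' := eq_or_ne k (2 * d - 3)
  · have h := wronskian_X_pow_mem (d := d) (c := c) (m := d - 2) (by omega)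
    rw [wronskian_X_pow_X_pow, show d - 2 + d - 1 = 2 * d - 3 by omega] at h
    exact mem_of_C_mul_mem (sub_ne_zero.2 (Nat.cast_injective.ne (by omega))) h
  · obtain ⟨m, rfl⟩ : ∃ m, k = m + (d - 2) := ⟨k - (d - 2), by omega⟩
    have h := wronskian_X_pow_pred_mem (c := c)
      (X_pow_mem_degreeLE (R := K) (m := m) (n := d) (by omega))
    rw [wronskian_X_pow_X_pow, show m + (d - 1) - 1 = m + (d - 2) by omega] at h
    exact mem_of_C_mul_mem (sub_ne_zero.2 (Nat.cast_injective.ne (by omega))) h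

theorem degreeLE_le (hd : 2 ≤ d) : degreeLE K ↑(2 * d - 2) ≤ imageDQ d c := by
  classical
  rw [degreeLE_eq_span_X_pow, Submodule.span_le]
  intro p hp
  obtain ⟨k, hk, rfl⟩ := Finset.mem_image.1 hp
  exact X_pow_mem hd (Nat.lt_succ_iff.1 (Finset.mem_range.1 hk))

end imageDQ

/-- For `d ≥ 3` and `F = (z^{d-1} - 1, -d·z/(d-2), z^d - d·z/(d-2), 1)`, the linear
map `dQ_F(U) = {U₀,F₁} + {F₀,U₁} + {U₂,F₃} + {F₂,U₃}` (with `{G,H} = G'H - GH'`)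
from `(ℂ[z]_{≤d})⁴` to `ℂ[z]_{≤2d-2}` is surjective. -/
theorem stmt5 (d : ℕ) (hd : 3 ≤ d) (R : ℂ[X]) (hR : R.natDegree ≤ 2 * d - 2) :
    ∃ U₀ U₁ U₂ U₃ : ℂ[X],
      U₀.natDegree ≤ d ∧ U₁.natDegree ≤ d ∧ U₂.natDegree ≤ d ∧ U₃.natDegree ≤ d ∧
      (derivative U₀ * (C (-(d : ℂ) / ((d : ℂ) - 2)) * X)
          - U₀ * derivative (C (-(d : ℂ) / ((d : ℂ) - 2)) * X))
        + (derivative (X ^ (d - 1) - 1 : ℂ[X]) * U₁ - (X ^ (d - 1) - 1) * derivative U₁)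
        + (derivative U₂ * 1 - U₂ * derivative (1 : ℂ[X]))
        + (derivative (X ^ d - C ((d : ℂ) / ((d : ℂ) - 2)) * X : ℂ[X]) * U₃
          - (X ^ d - C ((d : ℂ) / ((d : ℂ) - 2)) * X) * derivative U₃) = R := by
  have hmem : R ∈ imageDQ d ((d : ℂ) / ((d : ℂ) - 2)) :=
    imageDQ.degreeLE_le (by omega) (mem_degreeLE.2 (degree_le_of_natDegree_le hR))
  obtain ⟨⟨U₁, U₂, U₃⟩, ⟨hU₁, hU₂, hU₃⟩, rfl⟩ := hmem
  refine ⟨0, U₁, U₂, U₃, by simp, natDegree_le_of_degree_le (mem_degreeLE.1 hU₁),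
    natDegree_le_of_degree_le (mem_degreeLE.1 hU₂),
    natDegree_le_of_degree_le (mem_degreeLE.1 hU₃), ?_⟩
  simp only [dQ_apply, wronskian, derivative_zero, derivative_one]
  ring
end

section
/- Let d ≥ 3, α ∈ ℂ \ {0}, and ℓ, k positive integers with ℓ ≠ k and ℓ + k = d. For any t ∈ ℂ, the quadruple F_t(z) = (z^k - α, t·((ℓ+k)/(ℓ-k))·z^ℓ, z^ℓ(z^k - α(ℓ+k)/(ℓ-k)), t) satisfies Q(F_t) = F₁F₀' - F₀F₁' + F₃F₂' - F₂F₃' = 0. -/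
/-!
Here `Q(F) = W(F₁, F₀) + W(F₃, F₂)` with `W` the Wronskian. Multiplying by `X` turns
each derivative of a monomial into a scalar multiple of that monomial (Euler's identity
`X (Xⁿ)' = n Xⁿ`), so `X · Q(F_t)` is a combination of `X^ℓ` and
`X^(ℓ+k)` whose coefficients vanish exactly because `r (ℓ - k) = ℓ + k` for
`r = (ℓ + k)/(ℓ - k)`. Since `X` is a non-zero-divisor, `Q(F_t) = 0`.
-/

open Polynomial

namespace Polynomial

variable {R : Type*} [CommRing R]

theorem X_mul_derivative_X_pow (n : ℕ) : X * derivative (X ^ n : R[X]) = C (n : R) * X ^ n := by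
  cases n with
  | zero => simp
  | succ n =>
    rw [derivative_X_pow, Nat.add_sub_cancel, pow_succ]
    ring

theorem wronskian_C_mul_X_pow_add_wronskian_C_eq_zero (ℓ k : ℕ) {r t α : R}
    (hr : r * ((ℓ : R) - k) = ℓ + k) :
    wronskian (C (t * r) * X ^ ℓ) (X ^ k - C α)
      + wronskian (C t) (X ^ ℓ * (X ^ k - C (α * r))) = 0 := by
  have euler_F₀ : X * derivative (X ^ k - C α) = C (k : R) * X ^ k := by
    rw [derivative_sub, derivative_C, sub_zero, X_mul_derivative_X_pow]
  have euler_F₁ : X * derivative (C (t * r) * X ^ ℓ) = C (t * r) * (C (ℓ : R) * X ^ ℓ) := by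
    rw [derivative_C_mul, mul_left_comm, X_mul_derivative_X_pow]
  have euler_F₂ : X * derivative (X ^ ℓ * (X ^ k - C (α * r))) =
      C ((ℓ + k : ℕ) : R) * X ^ (ℓ + k) - C (α * r) * (C (ℓ : R) * X ^ ℓ) := by
    rw [mul_sub, ← pow_add, mul_comm (X ^ ℓ), derivative_sub, derivative_C_mul, mul_sub,
      mul_left_comm X (C _), X_mul_derivative_X_pow, X_mul_derivative_X_pow]
  apply (isRegular_X (R := R)).left
  simp only [wronskian, derivative_C, zero_mul, sub_zero, mul_zero]
  have hrC : C r * (C (ℓ : R) - C (k : R)) = C (ℓ : R) + C (k : R) := by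
    rw [← C_sub, ← C_mul, hr, C_add]
  simp only [C_mul, Nat.cast_add, C_add] at euler_F₀ euler_F₁ euler_F₂ ⊢
  linear_combination -(C t * X ^ (ℓ + k)) * hrC
    + (C t * C r * X ^ ℓ) * euler_F₀ - (X ^ k - C α) * euler_F₁ + C t * euler_F₂

end Polynomial

theorem stmt8_general (ℓ k : ℕ) (hne : ℓ ≠ k)
    (α : ℂ) (t : ℂ) :
    (C (t * (((ℓ : ℂ) + (k : ℂ)) / ((ℓ : ℂ) - (k : ℂ)))) * X ^ ℓ)
        * derivative (X ^ k - C α : ℂ[X])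
      - (X ^ k - C α)
        * derivative (C (t * (((ℓ : ℂ) + (k : ℂ)) / ((ℓ : ℂ) - (k : ℂ)))) * X ^ ℓ)
      + C t * derivative (X ^ ℓ * (X ^ k - C (α * (((ℓ : ℂ) + (k : ℂ)) / ((ℓ : ℂ) - (k : ℂ))))) : ℂ[X])
      - (X ^ ℓ * (X ^ k - C (α * (((ℓ : ℂ) + (k : ℂ)) / ((ℓ : ℂ) - (k : ℂ))))))
        * derivative (C t : ℂ[X]) = 0 := by
  have hr : ((ℓ : ℂ) + k) / ((ℓ : ℂ) - k) * ((ℓ : ℂ) - k) = ℓ + k :=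
    div_mul_cancel₀ _ (sub_ne_zero.mpr (Nat.cast_injective.ne hne))
  have hQ := wronskian_C_mul_X_pow_add_wronskian_C_eq_zero ℓ k (t := t) (α := α) hr
  simp only [wronskian] at hQ
  linear_combination hQ

/-- For `d ≥ 3`, `α ≠ 0`, positive integers `ℓ ≠ k` with `ℓ + k = d`, and any `t ∈ ℂ`,
the quadruple `F_t = (z^k - α, t((ℓ+k)/(ℓ-k))z^ℓ, z^ℓ(z^k - α(ℓ+k)/(ℓ-k)), t)`
satisfies `Q(F_t) = F₁F₀' - F₀F₁' + F₃F₂' - F₂F₃' = 0`. -/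
theorem stmt8 (d ℓ k : ℕ) (hℓ : 0 < ℓ) (hk : 0 < k) (hne : ℓ ≠ k)
    (hsum : ℓ + k = d) (hd : 3 ≤ d) (α : ℂ) (hα : α ≠ 0) (t : ℂ) :
    (C (t * (((ℓ : ℂ) + (k : ℂ)) / ((ℓ : ℂ) - (k : ℂ)))) * X ^ ℓ)
        * derivative (X ^ k - C α : ℂ[X])
      - (X ^ k - C α)
        * derivative (C (t * (((ℓ : ℂ) + (k : ℂ)) / ((ℓ : ℂ) - (k : ℂ)))) * X ^ ℓ)
      + C t * derivative (X ^ ℓ * (X ^ k - C (α * (((ℓ : ℂ) + (k : ℂ)) / ((ℓ : ℂ) - (k : ℂ))))) : ℂ[X])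
      - (X ^ ℓ * (X ^ k - C (α * (((ℓ : ℂ) + (k : ℂ)) / ((ℓ : ℂ) - (k : ℂ))))))
        * derivative (C t : ℂ[X]) = 0 :=
  stmt8_general ℓ k hne α t
end
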